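/- With ζ and σ as above (z > 1), the second derivative of ζ satisfies ζ''(z) = (2zσ(z)³ - 1)/(2σ(z)²ζ(z)). -/
import Mathlib

noncomputable def zeta (z : ℝ) : ℝ :=
  ((3 / 2) * ∫ t in (1:ℝ)..z, Real.sqrt (t ^ 2 - 1)) ^ ((2 : ℝ) / 3)

noncomputable def sigma (z : ℝ) : ℝ := Real.sqrt (zeta z / (z ^ 2 - 1))

noncomputable def gfun (z : ℝ) : ℝ := (3 / 2) * ∫ t in (1:ℝ)..z, Real.sqrt (t ^ 2 - 1)

lemma cont_sq : Continuous (fun t : ℝ => Real.sqrt (t ^ 2 - 1)) := by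
  exact Real.continuous_sqrt.comp (by continuity)

lemma gfun_hasDeriv (z : ℝ) : HasDerivAt gfun ((3/2) * Real.sqrt (z^2-1)) z := by
  have h := (intervalIntegral.integral_hasDerivAt_right
    (cont_sq.intervalIntegrable 1 z) (cont_sq.stronglyMeasurableAtFilter _ _)
    cont_sq.continuousAt)
  exact h.const_mul (3/2)

lemma gfun_pos {z : ℝ} (hz : 1 < z) : 0 < gfun z := by
  have h : 0 < ∫ t in (1:ℝ)..z, Real.sqrt (t^2-1) := by
    apply intervalIntegral.intervalIntegral_pos_of_pos_on (cont_sq.intervalIntegrable 1 z)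
    · intro x hx
      have h1 : 1 < x := hx.1
      have : 0 < x^2 - 1 := by nlinarith
      exact Real.sqrt_pos.mpr this
    · exact hz
  have : gfun z = (3/2) * ∫ t in (1:ℝ)..z, Real.sqrt (t^2-1) := rfl
  linarith

noncomputable def F (z : ℝ) : ℝ := Real.sqrt (z^2-1) * gfun z ^ (-(1:ℝ)/3)

lemma zeta_hasDeriv {z : ℝ} (hz : 1 < z) : HasDerivAt zeta (F z) z := by
  have h := (gfun_hasDeriv z).rpow_const (p := (2:ℝ)/3) (Or.inl (gfun_pos hz).ne')
  have e : (3/2) * Real.sqrt (z^2-1) * ((2:ℝ)/3) * gfun z ^ ((2:ℝ)/3 - 1) = F z := by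
    have h2 : ((2:ℝ)/3 - 1) = -(1:ℝ)/3 := by norm_num
    rw [h2]; unfold F; ring
  rw [e] at h
  exact h

theorem zeta_second_deriv :
    ∀ z : ℝ, 1 < z →
      deriv (deriv zeta) z
        = (2 * z * (sigma z) ^ 3 - 1) / (2 * (sigma z) ^ 2 * zeta z) := by
  intro z hz
  have hzpos : 0 < z ^ 2 - 1 := by nlinarith
  have hG : 0 < gfun z := gfun_pos hz
  have hs : 0 < Real.sqrt (z^2-1) := Real.sqrt_pos.mpr hzpos
  set s := Real.sqrt (z^2-1) with hsdef
  set u := gfun z ^ ((1:ℝ)/3) with hudef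
  have hu : 0 < u := Real.rpow_pos_of_pos hG _
  have hu3 : u ^ 3 = gfun z := by
    rw [hudef, ← Real.rpow_natCast (gfun z ^ ((1:ℝ)/3)) 3, ← Real.rpow_mul hG.le]
    norm_num
  have hs2 : s ^ 2 = z^2 - 1 := Real.sq_sqrt hzpos.le
  -- deriv zeta = F near z
  have hev : deriv zeta =ᶠ[nhds z] F := by
    filter_upwards [isOpen_Ioi.mem_nhds hz] with y hy
    exact (zeta_hasDeriv hy).deriv
  rw [hev.deriv_eq]
  -- compute deriv F
  have h1 : HasDerivAt (fun y : ℝ => Real.sqrt (y^2-1)) (2*z / (2*s)) z := by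
    have hp : HasDerivAt (fun y : ℝ => y^2 - 1) (2*z) z := by
      simpa using ((hasDerivAt_pow 2 z).sub_const 1)
    exact hp.sqrt hzpos.ne'
  have h2 : HasDerivAt (fun y : ℝ => gfun y ^ (-(1:ℝ)/3))
      ((3/2) * s * (-(1:ℝ)/3) * gfun z ^ (-(1:ℝ)/3 - 1)) z :=
    (gfun_hasDeriv z).rpow_const (Or.inl hG.ne')
  have hF : HasDerivAt F
      (2*z / (2*s) * gfun z ^ (-(1:ℝ)/3)
        + s * ((3/2) * s * (-(1:ℝ)/3) * gfun z ^ (-(1:ℝ)/3 - 1))) z := h1.mul h2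
  rw [hF.deriv]
  -- rewrite rpow expressions in terms of u
  have e1 : gfun z ^ (-(1:ℝ)/3) = u⁻¹ := by
    rw [hudef, ← Real.rpow_neg_one (gfun z ^ ((1:ℝ)/3)), ← Real.rpow_mul hG.le]
    norm_num
  have e2 : gfun z ^ (-(1:ℝ)/3 - 1) = (u^4)⁻¹ := by
    rw [hudef, ← Real.rpow_natCast (gfun z ^ ((1:ℝ)/3)) 4, ← Real.rpow_mul hG.le,
      ← Real.rpow_neg_one (gfun z ^ (((1:ℝ)/3) * (4:ℕ))), ← Real.rpow_mul hG.le]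
    norm_num
  have ezeta : zeta z = u ^ 2 := by
    have : zeta z = gfun z ^ ((2:ℝ)/3) := rfl
    rw [this, hudef, ← Real.rpow_natCast (gfun z ^ ((1:ℝ)/3)) 2, ← Real.rpow_mul hG.le]
    norm_num
  have esigma : sigma z = u / s := by
    have : sigma z = Real.sqrt (zeta z / (z^2-1)) := rfl
    rw [this, ezeta, ← hs2, ← div_pow, Real.sqrt_sq (by positivity)]
  rw [e1, e2, ezeta, esigma]
  field_simp
  ring
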